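/- Let S_λ be a weighted shift on a directed tree T with weights λ = {λ_v}_{v∈V°} such that the linear span of {e_u : u ∈ V} is contained in D^∞(S_λ). Then for all m, n ∈ ℤ₊ and u, v ∈ V: if Chi^m(u) ∩ Chi^n(v) = ∅, then ⟨S_λ^m e_u, S_λ^n e_v⟩ = 0; if Chi^m(u) ∩ Chi^n(v) ≠ ∅ and m ≤ n, then ⟨S_λ^m e_u, S_λ^n e_v⟩ = conj(λ_{v|u}) · ‖S_λ^m e_u‖²; and if Chi^m(u) ∩ Chi^n(v) ≠ ∅ and m > n, then ⟨S_λ^m e_u, S_λ^n e_v⟩ = λ_{u|v} · ‖S_λ^n e_v‖². -/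

import Mathlib

open MeasureTheory ENNReal
open scoped NNReal
noncomputable section

/-- `μ` is a representing measure of the sequence `t`. -/
def IsRepMeasure (μ : Measure ℝ≥0) (t : ℕ → ℝ) : Prop :=
  ∀ n : ℕ, Integrable (fun s : ℝ≥0 => (s : ℝ) ^ n) μ ∧ t n = ∫ s, (s : ℝ) ^ n ∂μ

/-- `t` is a Stieltjes moment sequence. -/
def IsStieltjesMoment (t : ℕ → ℝ) : Prop := ∃ μ : Measure ℝ≥0, IsRepMeasure μ t

/-- `t` is a determinate Stieltjes moment sequence. -/
def IsDetStieltjesMoment (t : ℕ → ℝ) : Prop := ∃! μ : Measure ℝ≥0, IsRepMeasure μ t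

section Operators

universe u
variable {H : Type u} [NormedAddCommGroup H] [InnerProductSpace ℂ H]

/-- The maximal domain of the composition `S ∘ T`. -/
def compDomain (S T : H →ₗ.[ℂ] H) : Submodule ℂ H where
  carrier := {x | ∃ hx : x ∈ T.domain, T ⟨x, hx⟩ ∈ S.domain}
  zero_mem' := ⟨T.domain.zero_mem, by
    have h0 : (⟨0, T.domain.zero_mem⟩ : T.domain) = 0 := rfl
    rw [h0, LinearPMap.map_zero]; exact S.domain.zero_mem⟩
  add_mem' := by
    rintro x y ⟨hx, hx'⟩ ⟨hy, hy'⟩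
    refine ⟨T.domain.add_mem hx hy, ?_⟩
    have : (⟨x + y, T.domain.add_mem hx hy⟩ : T.domain) = ⟨x, hx⟩ + ⟨y, hy⟩ := rfl
    rw [this, LinearPMap.map_add]
    exact S.domain.add_mem hx' hy'
  smul_mem' := by
    rintro c x ⟨hx, hx'⟩
    refine ⟨T.domain.smul_mem c hx, ?_⟩
    have : (⟨c • x, T.domain.smul_mem c hx⟩ : T.domain) = c • (⟨x, hx⟩ : T.domain) := rfl
    rw [this, LinearPMap.map_smul]
    exact S.domain.smul_mem c hx'

/-- Composition `S ∘ T` of partial operators, on the maximal domain. -/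
def pmapComp (S T : H →ₗ.[ℂ] H) : H →ₗ.[ℂ] H :=
  S.comp (T.domRestrict (compDomain S T)) (by
    rintro ⟨x, hx⟩
    have hxT : x ∈ T.domain := (Submodule.mem_inf.mp hx).2
    have hxD : x ∈ compDomain S T := (Submodule.mem_inf.mp hx).1
    first
      | exact hxD.choose_spec
      | (convert hxD.choose_spec using 2))

/-- Powers of a partial operator: `pmapPow S n = Sⁿ` with its natural domain. -/
def pmapPow (S : H →ₗ.[ℂ] H) : ℕ → (H →ₗ.[ℂ] H)
  | 0 => LinearMap.id.toPMap ⊤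
  | n + 1 => pmapComp (pmapPow S n) S

open Classical in
/-- Total (junk-valued) application of the power `Sⁿ`. -/
def powApp (S : H →ₗ.[ℂ] H) (n : ℕ) (x : H) : H :=
  if h : x ∈ (pmapPow S n).domain then (pmapPow S n) ⟨x, h⟩ else 0

/-- The set of `C^∞`-vectors of `S`. -/
def Dinf (S : H →ₗ.[ℂ] H) : Set H := {x | ∀ n : ℕ, x ∈ (pmapPow S n).domain}

/-- `F` is a core of `S`. -/
def IsCore (S : H →ₗ.[ℂ] H) (F : Submodule ℂ H) : Prop :=
  F ≤ S.domain ∧ (S.graph : Set (H × H)) ⊆ closure ((S.domRestrict F).graph : Set (H × H))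

end Operators
section Operators
universe u
variable {H : Type u} [NormedAddCommGroup H] [InnerProductSpace ℂ H]

/-- A normal (unbounded) operator: closed, densely defined, with `D(N*) = D(N)` and
`‖N* x‖ = ‖N x‖` on the common domain. -/
def IsNormalOp [CompleteSpace H] (N : H →ₗ.[ℂ] H) : Prop :=
  Dense (N.domain : Set H) ∧ N.IsClosed ∧ N.adjoint.domain = N.domain ∧
    ∀ (x : H) (hx : x ∈ N.domain) (hx' : x ∈ N.adjoint.domain),
      ‖N.adjoint ⟨x, hx'⟩‖ = ‖N ⟨x, hx⟩‖

/-- A subnormal operator: densely defined with a normal extension in a possibly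
larger Hilbert space. -/
def IsSubnormal {H : Type u} [NormedAddCommGroup H] [InnerProductSpace ℂ H]
    (S : H →ₗ.[ℂ] H) : Prop :=
  Dense (S.domain : Set H) ∧
  ∃ (K : Type u) (_ : NormedAddCommGroup K) (_ : InnerProductSpace ℂ K) (_ : CompleteSpace K)
    (J : H →ₗᵢ[ℂ] K) (N : K →ₗ.[ℂ] K), IsNormalOp N ∧
      ∀ x : S.domain, ∃ hx : J x ∈ N.domain, N ⟨J x, hx⟩ = J (S x)

/-- A hyponormal operator. -/
def IsHyponormal [CompleteSpace H] (S : H →ₗ.[ℂ] H) : Prop :=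
  Dense (S.domain : Set H) ∧
  ∀ (x : H) (hx : x ∈ S.domain), ∃ hx' : x ∈ S.adjoint.domain,
      ‖S.adjoint ⟨x, hx'⟩‖ ≤ ‖S ⟨x, hx⟩‖

end Operators

/-- A directed tree on the vertex set `V`: a connected directed graph without circuits
in which every non-root vertex has a unique parent. -/
structure DirectedTree (V : Type*) where
  edge : V → V → Prop
  connected : ∀ u v : V, Relation.ReflTransGen (fun a b => edge a b ∨ edge b a) u v
  no_circuits : ∀ v : V, ¬ Relation.TransGen edge v v
  parent_unique : ∀ u v w : V, edge v u → edge w u → v = w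

namespace DirectedTree

variable {V : Type*}

/-- The roots: vertices with no incoming edge. -/
def isRoot (T : DirectedTree V) (v : V) : Prop := ¬ ∃ u : V, T.edge u v

/-- `V°`: the non-root vertices, i.e. vertices having a parent. -/
def nonRoot (T : DirectedTree V) (v : V) : Prop := ∃ u : V, T.edge u v

open Classical in
/-- The parent function (with junk value at roots). -/
def par (T : DirectedTree V) (v : V) : V := if h : ∃ u : V, T.edge u v then h.choose else v

/-- The set of children of a vertex. -/
def chi (T : DirectedTree V) (u : V) : Set V := {v | T.edge u v}

/-- Iterated children `Chi^n(u)`. -/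
def chiN (T : DirectedTree V) : ℕ → V → Set V
  | 0, u => {u}
  | n + 1, u => ⋃ w ∈ T.chiN n u, T.chi w

/-- The descendants of `u`. -/
def des (T : DirectedTree V) (u : V) : Set V := ⋃ n : ℕ, T.chiN n u

/-- `T` is leafless: every vertex has a child. -/
def Leafless (T : DirectedTree V) : Prop := ∀ u : V, ∃ v : V, T.edge u v

/-- The product `λ_{u∣v} = ∏_{j=0}^{n-1} λ_{par^j(v)}` of the weights along the path of
length `n` ending at `v` (for `v ∈ Chi^n(u)` this is the usual `λ_{u∣v}`). -/
def pathProd (T : DirectedTree V) (lam : V → ℂ) (n : ℕ) (v : V) : ℂ :=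
  ∏ j ∈ Finset.range n, lam (T.par^[j] v)

open Classical in
/-- The formal weighted-shift transformation `Λ_T` on families of complex numbers. -/
def lamMap (T : DirectedTree V) (lam : V → ℂ) (f : V → ℂ) : V → ℂ :=
  fun v => if T.nonRoot v then lam v * f (T.par v) else 0

variable (T : DirectedTree V)

theorem lamMap_add (lam : V → ℂ) (f g : V → ℂ) :
    T.lamMap lam (f + g) = T.lamMap lam f + T.lamMap lam g := by
  funext v; simp only [lamMap, Pi.add_apply]; split <;> ring

theorem lamMap_smul (lam : V → ℂ) (c : ℂ) (f : V → ℂ) :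
    T.lamMap lam (c • f) = c • T.lamMap lam f := by
  funext v; simp only [lamMap, Pi.smul_apply, smul_eq_mul]; split <;> ring

theorem lamMap_zero (lam : V → ℂ) : T.lamMap lam (0 : V → ℂ) = 0 := by
  funext v; simp [lamMap]

/-- The domain of the weighted shift `S_λ`. -/
def shiftDomain (lam : V → ℂ) : Submodule ℂ (lp (fun _ : V => ℂ) 2) where
  carrier := {f | Memℓp (T.lamMap lam f) 2}
  zero_mem' := by
    rw [Set.mem_setOf_eq, lp.coeFn_zero, lamMap_zero]
    exact zero_memℓp
  add_mem' := by
    intro f g hf hg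
    rw [Set.mem_setOf_eq, lp.coeFn_add, lamMap_add]
    exact hf.add hg
  smul_mem' := by
    intro c f hf
    rw [Set.mem_setOf_eq, lp.coeFn_smul, lamMap_smul]
    exact hf.const_smul c

/-- The weighted shift `S_λ` on the directed tree `T`, as a partial operator in `ℓ²(V)`. -/
def shift (lam : V → ℂ) : lp (fun _ : V => ℂ) 2 →ₗ.[ℂ] lp (fun _ : V => ℂ) 2 where
  domain := T.shiftDomain lam
  toFun :=
    { toFun := fun f => (⟨T.lamMap lam f, f.2⟩ : lp (fun _ : V => ℂ) 2)
      map_add' := by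
        rintro f g
        apply lp.ext
        rw [lp.coeFn_add]
        show T.lamMap lam
            ((((f : lp (fun _ : V => ℂ) 2) : V → ℂ)) + (((g : lp (fun _ : V => ℂ) 2) : V → ℂ)))
          = T.lamMap lam ((f : lp (fun _ : V => ℂ) 2) : V → ℂ)
            + T.lamMap lam ((g : lp (fun _ : V => ℂ) 2) : V → ℂ)
        exact T.lamMap_add lam _ _
      map_smul' := by
        rintro c f
        apply lp.ext
        rw [lp.coeFn_smul]
        show T.lamMap lam (c • (((f : lp (fun _ : V => ℂ) 2) : V → ℂ)))
          = c • T.lamMap lam ((f : lp (fun _ : V => ℂ) 2) : V → ℂ)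
        exact T.lamMap_smul lam c _ }

end DirectedTree

open Classical in
/-- The basis vector `e_u` of `ℓ²(V)`. -/
def eVec {V : Type*} (u : V) : lp (fun _ : V => ℂ) 2 := lp.single 2 u 1

section MoreDefs
universe u
variable {H : Type u} [NormedAddCommGroup H] [InnerProductSpace ℂ H]

/-- The inner product, linear in the FIRST argument (the paper's convention). -/
def innerPaper (x y : H) : ℂ := inner ℂ y x

/-- The moment sequence `n ↦ ‖Sⁿ f‖²` generated by the vector `f`. -/
def momentSeq (S : H →ₗ.[ℂ] H) (f : H) : ℕ → ℝ := fun n => ‖powApp S n f‖ ^ 2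

/-- `f` is a quasi-analytic vector of `S` : `f ∈ D^∞(S)` and
`∑ₙ ‖Sⁿ f‖^{-1/n} = ∞` (with `1/0 = ∞`). -/
def IsQuasiAnalyticVec (S : H →ₗ.[ℂ] H) (f : H) : Prop :=
  (∀ n : ℕ, f ∈ (pmapPow S n).domain) ∧
  ∑' n : ℕ, ((‖powApp S (n + 1) f‖₊ ^ ((1 : ℝ) / (n + 1)) : ℝ≥0) : ℝ≥0∞)⁻¹ = ∞

end MoreDefs

/-- The consistency condition `μ_u(σ) = ∑_{v ∈ Chi(u)} |λ_v|² ∫_σ (1/s) dμ_v(s) + ε_u δ₀(σ)`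
at the vertex `u` (with the convention `1/0 = ∞`). -/
def consistentAt {V : Type*} (T : DirectedTree V) (lam : V → ℂ) (μ : V → MeasureTheory.Measure ℝ≥0)
    (ε : V → ℝ≥0) (u : V) : Prop :=
  ∀ σ : Set ℝ≥0, MeasurableSet σ →
    μ u σ = (∑' v : {v : V // T.edge u v},
        (‖lam (v : V)‖₊ : ℝ≥0∞) ^ 2 * ∫⁻ s in σ, ((s : ℝ≥0∞))⁻¹ ∂(μ (v : V)))
      + (ε u : ℝ≥0∞) * MeasureTheory.Measure.dirac (0 : ℝ≥0) σ

/-- The sequence `{ϑ, t₀, t₁, t₂, …}` obtained by prepending `ϑ` to `t`. -/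
def shiftedSeq (ϑ : ℝ) (t : ℕ → ℝ) : ℕ → ℝ := fun n => match n with
  | 0 => ϑ
  | n + 1 => t n

/-- A positive definite sequence of real numbers. -/
def IsPosDefSeq (t : ℕ → ℝ) : Prop :=
  ∀ (n : ℕ) (α : ℕ → ℂ),
    0 ≤ (∑ k ∈ Finset.range (n + 1), ∑ l ∈ Finset.range (n + 1),
        (t (k + l) : ℂ) * α k * (starRingEnd ℂ) (α l)).re ∧
    (∑ k ∈ Finset.range (n + 1), ∑ l ∈ Finset.range (n + 1),
        (t (k + l) : ℂ) * α k * (starRingEnd ℂ) (α l)).im = 0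

/-! `S_λ^n e_u` is the function supported on `Chi^n(u)` whose value at `w` is `λ_{u|w}`.
If `Chi^m(u)` meets `Chi^n(v)` and `m ≤ n`, going up `m` generations from a common vertex
shows `u ∈ Chi^{n-m}(v)`; then `Chi^m(u) ⊆ Chi^n(v)` and `λ_{v|w} = λ_{v|u} λ_{u|w}` on
`Chi^m(u)`, so the inner product collapses to `conj(λ_{v|u}) ‖S_λ^m e_u‖²`. The case `m > n`
follows by conjugate symmetry. -/

section PartialOperatorPowers

variable {H : Type*} [NormedAddCommGroup H] [InnerProductSpace ℂ H] {S : H →ₗ.[ℂ] H}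

lemma powApp_zero (x : H) : powApp S 0 x = x := by
  rw [powApp, dif_pos (by trivial : x ∈ (pmapPow S 0).domain)]
  rfl

lemma mem_domain_of_mem_Dinf {x : H} (hx : x ∈ Dinf S) : x ∈ S.domain :=
  (Submodule.mem_inf.mp (hx 1)).2

lemma apply_mem_Dinf {x : H} (hx : x ∈ Dinf S) :
    S ⟨x, mem_domain_of_mem_Dinf hx⟩ ∈ Dinf S :=
  fun n => (Submodule.mem_inf.mp (hx (n + 1))).1.2

lemma pmapComp_apply {P Q : H →ₗ.[ℂ] H} {x : H} (hxQ : x ∈ Q.domain)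
    (hQx : Q ⟨x, hxQ⟩ ∈ P.domain) (hx : x ∈ (pmapComp P Q).domain) :
    pmapComp P Q ⟨x, hx⟩ = P ⟨Q ⟨x, hxQ⟩, hQx⟩ := by
  have hQ : ((Q.domRestrict (compDomain P Q)) ⟨x, hx⟩ : H) = Q ⟨x, hxQ⟩ :=
    LinearPMap.domRestrict_apply rfl
  exact congrArg P (Subtype.ext hQ)

lemma powApp_succ_of_mem_Dinf {x : H} (hx : x ∈ Dinf S) (n : ℕ) :
    powApp S (n + 1) x = powApp S n (S ⟨x, mem_domain_of_mem_Dinf hx⟩) := by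
  rw [powApp, dif_pos (hx (n + 1)), powApp, dif_pos (apply_mem_Dinf hx n)]
  exact pmapComp_apply _ _ _

end PartialOperatorPowers

namespace DirectedTree

variable {V : Type*} (T : DirectedTree V)

lemma par_eq_of_edge {x w : V} (hx : T.edge x w) : T.par w = x := by
  have h : ∃ y, T.edge y w := ⟨x, hx⟩
  rw [par, dif_pos h]
  exact T.parent_unique w _ x h.choose_spec hx

lemma mem_chiN_succ {n : ℕ} {u w : V} :
    w ∈ T.chiN (n + 1) u ↔ T.nonRoot w ∧ T.par w ∈ T.chiN n u := by
  simp only [chiN, chi, Set.mem_iUnion, Set.mem_ofPred_eq, exists_prop]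
  constructor
  · rintro ⟨x, hx, hxw⟩
    exact ⟨⟨x, hxw⟩, T.par_eq_of_edge hxw ▸ hx⟩
  · rintro ⟨⟨x, hxw⟩, hpar⟩
    exact ⟨x, T.par_eq_of_edge hxw ▸ hpar, hxw⟩

lemma par_iterate_of_mem_chiN {m : ℕ} {u w : V} (hw : w ∈ T.chiN m u) :
    T.par^[m] w = u := by
  induction m generalizing w with
  | zero => exact hw
  | succ m ih => exact ih (T.mem_chiN_succ.mp hw).2

lemma par_iterate_mem_chiN {m k : ℕ} {v w : V} (hw : w ∈ T.chiN (m + k) v) :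
    T.par^[m] w ∈ T.chiN k v := by
  induction m generalizing w with
  | zero => simpa using hw
  | succ m ih =>
    rw [Nat.succ_add] at hw
    exact ih (T.mem_chiN_succ.mp hw).2

lemma mem_chiN_add {k m : ℕ} {v u w : V} (hu : u ∈ T.chiN k v) (hw : w ∈ T.chiN m u) :
    w ∈ T.chiN (k + m) v := by
  induction m generalizing w with
  | zero => exact (show w = u from hw) ▸ hu
  | succ m ih =>
    obtain ⟨hw, hpar⟩ := T.mem_chiN_succ.mp hw
    exact T.mem_chiN_succ.mpr ⟨hw, ih hpar⟩

lemma mem_chiN_of_mem_inter {m k : ℕ} {u v w : V} (hwu : w ∈ T.chiN m u)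
    (hwv : w ∈ T.chiN (m + k) v) : u ∈ T.chiN k v :=
  T.par_iterate_of_mem_chiN hwu ▸ T.par_iterate_mem_chiN hwv

lemma pathProd_succ (lam : V → ℂ) (n : ℕ) (w : V) :
    T.pathProd lam (n + 1) w = lam w * T.pathProd lam n (T.par w) := by
  simp only [pathProd, Finset.prod_range_succ', Function.iterate_succ_apply,
    Function.iterate_zero_apply, mul_comm]

lemma pathProd_add (lam : V → ℂ) (m k : ℕ) (w : V) :
    T.pathProd lam (m + k) w = T.pathProd lam m w * T.pathProd lam k (T.par^[m] w) := by
  simp only [pathProd, Finset.prod_range_add, ← Function.iterate_add_apply, Nat.add_comm]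

open Classical in
def shiftPowCoeff (lam : V → ℂ) (n : ℕ) (u : V) : V → ℂ :=
  fun w => if w ∈ T.chiN n u then T.pathProd lam n w else 0

lemma shiftPowCoeff_of_not_mem (lam : V → ℂ) {n : ℕ} {u w : V} (hw : w ∉ T.chiN n u) :
    T.shiftPowCoeff lam n u w = 0 :=
  if_neg hw

lemma shiftPowCoeff_of_mem_chiN (lam : V → ℂ) {k m : ℕ} {u v w : V} (hu : u ∈ T.chiN k v)
    (hw : w ∈ T.chiN m u) :
    T.shiftPowCoeff lam (m + k) v w = T.pathProd lam k u * T.shiftPowCoeff lam m u w := by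
  have hwv : w ∈ T.chiN (m + k) v := Nat.add_comm k m ▸ T.mem_chiN_add hu hw
  simp only [shiftPowCoeff, if_pos hw, if_pos hwv, T.pathProd_add,
    T.par_iterate_of_mem_chiN hw, mul_comm]

lemma lamMap_shiftPowCoeff (lam : V → ℂ) (n : ℕ) (u : V) :
    T.lamMap lam (T.shiftPowCoeff lam n u) = T.shiftPowCoeff lam (n + 1) u := by
  funext w
  by_cases hw : T.nonRoot w ∧ T.par w ∈ T.chiN n u
  · simp [lamMap, shiftPowCoeff, hw.1, hw.2, T.mem_chiN_succ.mpr hw, T.pathProd_succ]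
  · have hw' : w ∉ T.chiN (n + 1) u := fun h => hw (T.mem_chiN_succ.mp h)
    rw [T.shiftPowCoeff_of_not_mem lam hw', lamMap]
    split_ifs with hroot
    · rw [T.shiftPowCoeff_of_not_mem lam fun h => hw ⟨hroot, h⟩, mul_zero]
    · rfl

lemma iterate_lamMap_eVec (lam : V → ℂ) (n : ℕ) (u : V) :
    (T.lamMap lam)^[n] ((eVec u : lp (fun _ : V => ℂ) 2) : V → ℂ)
      = T.shiftPowCoeff lam n u := by
  classical
  induction n with
  | zero =>
    funext w
    simp [eVec, lp.single_apply, Pi.single_apply, shiftPowCoeff, chiN, pathProd]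
  | succ n ih => rw [Function.iterate_succ_apply', ih, T.lamMap_shiftPowCoeff]

lemma coe_powApp_shift {lam : V → ℂ} {x : lp (fun _ : V => ℂ) 2}
    (hx : x ∈ Dinf (T.shift lam)) (n : ℕ) :
    ((powApp (T.shift lam) n x : lp (fun _ : V => ℂ) 2) : V → ℂ) = (T.lamMap lam)^[n] x := by
  induction n generalizing x with
  | zero => rw [powApp_zero]; rfl
  | succ n ih => rw [powApp_succ_of_mem_Dinf hx, ih (apply_mem_Dinf hx)]; rfl

lemma coe_powApp_shift_eVec {lam : V → ℂ} {u : V} (hu : eVec u ∈ Dinf (T.shift lam))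
    (n : ℕ) :
    ((powApp (T.shift lam) n (eVec u) : lp (fun _ : V => ℂ) 2) : V → ℂ)
      = T.shiftPowCoeff lam n u := by
  rw [T.coe_powApp_shift hu, T.iterate_lamMap_eVec]

variable {T} {lam : V → ℂ} {u v : V}

lemma innerPaper_powApp_eVec (hu : eVec u ∈ Dinf (T.shift lam))
    (hv : eVec v ∈ Dinf (T.shift lam)) (m n : ℕ) :
    innerPaper (powApp (T.shift lam) m (eVec u)) (powApp (T.shift lam) n (eVec v))
      = ∑' w, starRingEnd ℂ (T.shiftPowCoeff lam n v w) * T.shiftPowCoeff lam m u w := by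
  simp only [innerPaper, lp.inner_eq_tsum, RCLike.inner_apply, T.coe_powApp_shift_eVec hu,
    T.coe_powApp_shift_eVec hv, mul_comm]

lemma innerPaper_powApp_eVec_of_disjoint (hu : eVec u ∈ Dinf (T.shift lam))
    (hv : eVec v ∈ Dinf (T.shift lam)) {m n : ℕ} (huv : T.chiN m u ∩ T.chiN n v = ∅) :
    innerPaper (powApp (T.shift lam) m (eVec u)) (powApp (T.shift lam) n (eVec v)) = 0 := by
  rw [innerPaper_powApp_eVec hu hv]
  refine (tsum_congr fun w => ?_).trans tsum_zero
  by_cases hw : w ∈ T.chiN m u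
  · have hwv : w ∉ T.chiN n v := fun h => (Set.eq_empty_iff_forall_notMem.mp huv w) ⟨hw, h⟩
    rw [T.shiftPowCoeff_of_not_mem lam hwv, map_zero, zero_mul]
  · rw [T.shiftPowCoeff_of_not_mem lam hw, mul_zero]

lemma innerPaper_powApp_eVec_of_mem_chiN (hu : eVec u ∈ Dinf (T.shift lam))
    (hv : eVec v ∈ Dinf (T.shift lam)) {k : ℕ} (huv : u ∈ T.chiN k v) (m : ℕ) :
    innerPaper (powApp (T.shift lam) m (eVec u)) (powApp (T.shift lam) (m + k) (eVec v))
      = starRingEnd ℂ (T.pathProd lam k u)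
        * ((‖powApp (T.shift lam) m (eVec u)‖ ^ 2 : ℝ) : ℂ) := by
  have hnorm : ((‖powApp (T.shift lam) m (eVec u)‖ ^ 2 : ℝ) : ℂ)
      = innerPaper (powApp (T.shift lam) m (eVec u)) (powApp (T.shift lam) m (eVec u)) := by
    rw [innerPaper, inner_self_eq_norm_sq_to_K]; norm_cast
  rw [hnorm, innerPaper_powApp_eVec hu hv, innerPaper_powApp_eVec hu hu, ← tsum_mul_left]
  refine tsum_congr fun w => ?_
  by_cases hw : w ∈ T.chiN m u
  · rw [T.shiftPowCoeff_of_mem_chiN lam huv hw, map_mul, mul_assoc]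
  · simp only [T.shiftPowCoeff_of_not_mem lam hw, mul_zero]

end DirectedTree

/-- the formula for `⟨S_λ^m e_u, S_λ^n e_v⟩` (inner product linear in the
first argument, as in the paper). -/
theorem stmt7 {V : Type*} (T : DirectedTree V) (lam : V → ℂ)
    (hdom : (Submodule.span ℂ (Set.range (eVec (V := V))) : Set (lp (fun _ : V => ℂ) 2)) ⊆ Dinf (T.shift lam)) :
    ∀ (m n : ℕ) (u v : V),
      (T.chiN m u ∩ T.chiN n v = ∅ →
        innerPaper (powApp (T.shift lam) m (eVec u)) (powApp (T.shift lam) n (eVec v)) = 0)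
      ∧ ((T.chiN m u ∩ T.chiN n v).Nonempty → m ≤ n →
        innerPaper (powApp (T.shift lam) m (eVec u)) (powApp (T.shift lam) n (eVec v))
          = (starRingEnd ℂ) (T.pathProd lam (n - m) u)
            * ((‖powApp (T.shift lam) m (eVec u)‖ ^ 2 : ℝ) : ℂ))
      ∧ ((T.chiN m u ∩ T.chiN n v).Nonempty → n < m →
        innerPaper (powApp (T.shift lam) m (eVec u)) (powApp (T.shift lam) n (eVec v))
          = T.pathProd lam (m - n) v
            * ((‖powApp (T.shift lam) n (eVec v)‖ ^ 2 : ℝ) : ℂ)) := by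
  intro m n u v
  have hE : ∀ w : V, eVec w ∈ Dinf (T.shift lam) :=
    fun w => hdom (Submodule.subset_span ⟨w, rfl⟩)
  refine ⟨DirectedTree.innerPaper_powApp_eVec_of_disjoint (hE u) (hE v), ?_, ?_⟩
  · rintro ⟨w, hwu, hwv⟩ hmn
    obtain ⟨k, rfl⟩ := Nat.exists_eq_add_of_le hmn
    rw [Nat.add_sub_cancel_left]
    exact DirectedTree.innerPaper_powApp_eVec_of_mem_chiN (hE u) (hE v)
      (T.mem_chiN_of_mem_inter hwu hwv) m
  · rintro ⟨w, hwu, hwv⟩ hnm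
    obtain ⟨k, rfl⟩ := Nat.exists_eq_add_of_le hnm.le
    rw [Nat.add_sub_cancel_left, innerPaper, ← inner_conj_symm, ← innerPaper,
      DirectedTree.innerPaper_powApp_eVec_of_mem_chiN (hE v) (hE u)
        (T.mem_chiN_of_mem_inter hwv hwu) n,
      map_mul, Complex.conj_conj, Complex.conj_ofReal]
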